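/- For every t ∈ [0,1] one has 0 ≤ P_c(t) ≤ P_b, where P_b = P_c(1); moreover P_c(0) = 0. (This is property 3 of the paper's Lemma 3: the STP of a cached file never exceeds the STP of a backhaul file.) -/

import Mathlib

open MeasureTheory Finset

/-- `L_0(t) = 2t·∫_1^∞ τu/(u^β+τ) du + 2(1−t)·∫_0^∞ τu/(u^β+τ) du`. -/
noncomputable def L0 (β τ t : ℝ) : ℝ :=
  2 * t * (∫ u in Set.Ioi (1 : ℝ), τ * u / (u ^ β + τ)) +
    2 * (1 - t) * (∫ u in Set.Ioi (0 : ℝ), τ * u / (u ^ β + τ))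

/-- `L_i(t) = 2t·∫_1^∞ τ^i u^{β+1}/(u^β+τ)^{i+1} du + 2(1−t)·∫_0^∞ τ^i u^{β+1}/(u^β+τ)^{i+1} du`
for integers `i ≥ 1`. -/
noncomputable def Li (β τ : ℝ) (i : ℕ) (t : ℝ) : ℝ :=
  2 * t * (∫ u in Set.Ioi (1 : ℝ), τ ^ i * u ^ (β + 1) / (u ^ β + τ) ^ (i + 1)) +
    2 * (1 - t) * (∫ u in Set.Ioi (0 : ℝ), τ ^ i * u ^ (β + 1) / (u ^ β + τ) ^ (i + 1))

/-- The strictly lower-triangular Toeplitz matrix `D(t)` with `(D(t))_{jk} = L_{j−k}(t)` for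
`j > k` and `0` otherwise. -/
noncomputable def Dmat (β τ : ℝ) (N : ℕ) (t : ℝ) : Matrix (Fin N) (Fin N) ℝ :=
  fun j k => if (k : ℕ) < (j : ℕ) then Li β τ ((j : ℕ) - (k : ℕ)) t else 0

/-- The induced `ℓ1` matrix norm `‖M‖₁ = max_{1≤j≤N} ∑_{i=1}^N |M_{ij}|`. -/
noncomputable def matNorm1 {N : ℕ} (M : Matrix (Fin N) (Fin N) ℝ) : ℝ :=
  ⨆ j : Fin N, ∑ i : Fin N, |M i j|

/-- The successful transmission probability of a cached file stored with caching probability `t`: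
`P_c(t) = (t/(t+L_0(t)))·‖(I − (1/(t+L_0(t)))·D(t))^{−1}‖₁`. -/
noncomputable def Pc (β τ : ℝ) (N : ℕ) (t : ℝ) : ℝ :=
  (t / (t + L0 β τ t)) *
    matNorm1 ((1 - (1 / (t + L0 β τ t)) • Dmat β τ N t)⁻¹)

/-
`I − D(t)/(t+L₀(t))` is the lower-triangular Toeplitz matrix of the power series `1 − Y_t`, where
`[Xⁱ] Y_t = L_i(t)/(t+L₀(t))`, so its inverse is the Toeplitz matrix of `(1 − Y_t)⁻¹`. These
coefficients are nonnegative, so the first column has the largest sum and `P_c(t)` is the success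
probability `absorptionProb` of a walk that at each step stops successfully with probability
`t/(t+L₀(t))` or moves down by `i` levels with probability `[Xⁱ] Y_t`.
By Abel summation this probability can only grow when the law of (success, step) is replaced by one
with larger cumulative sums, and the law at `t` is dominated in this way by the law at `t = 1`:
`∑_{i≤m} L_i` integrates `τu/(u^β+τ)` against the weight `1 − (τ/(u^β+τ))^m`, which increases
with `u`, so a Chebyshev-type inequality between the integrals over `(0,1]` and `(1,∞)` gives the
domination.
-/

open PowerSeries

section Toeplitz

variable {R : Type*}

noncomputable def lowerToeplitz [Semiring R] (N : ℕ) (φ : R⟦X⟧) : Matrix (Fin N) (Fin N) R :=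
  fun j k => if k ≤ j then coeff ((j : ℕ) - k) φ else 0

lemma lowerToeplitz_one [Semiring R] (N : ℕ) : lowerToeplitz N (1 : R⟦X⟧) = 1 := by
  ext j k
  simp only [lowerToeplitz, coeff_one, Matrix.one_apply, Fin.ext_iff, Fin.le_iff_val_le_val]
  split_ifs <;> first | rfl | omega

lemma lowerToeplitz_sub [Ring R] (N : ℕ) (φ ψ : R⟦X⟧) :
    lowerToeplitz N (φ - ψ) = lowerToeplitz N φ - lowerToeplitz N ψ := by
  ext j k
  simp only [lowerToeplitz, map_sub, Matrix.sub_apply]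
  split_ifs <;> simp

lemma lowerToeplitz_mul [CommSemiring R] (N : ℕ) (φ ψ : R⟦X⟧) :
    lowerToeplitz N (φ * ψ) = lowerToeplitz N φ * lowerToeplitz N ψ := by
  ext j k
  simp only [lowerToeplitz, Matrix.mul_apply, ite_mul, zero_mul, mul_ite, mul_zero, coeff_mul]
  simp_rw [← ite_and, ← sum_filter]
  split_ifs with hkj
  · symm
    refine sum_bij' (fun m _ => ((j : ℕ) - m, (m : ℕ) - k))
      (fun p hp => ⟨k + p.2, by rw [HasAntidiagonal.mem_antidiagonal] at hp; omega⟩)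
      ?_ ?_ ?_ ?_ fun _ _ => rfl
    all_goals
      intro _ h
      simp only [mem_filter, mem_univ, true_and, Fin.le_iff_val_le_val,
        HasAntidiagonal.mem_antidiagonal] at h ⊢
    all_goals first | omega | ext <;> simp only <;> omega
  · refine (sum_eq_zero fun m hm => ?_).symm
    simp only [mem_filter] at hm
    exact absurd (hm.2.1.trans hm.2.2) hkj

lemma lowerToeplitz_inv [Field R] (N : ℕ) {φ : R⟦X⟧} (hφ : constantCoeff φ ≠ 0) :
    (lowerToeplitz N φ)⁻¹ = lowerToeplitz N φ⁻¹ :=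
  Matrix.inv_eq_right_inv <| by
    rw [← lowerToeplitz_mul, PowerSeries.mul_inv_cancel _ hφ, lowerToeplitz_one]

lemma sum_abs_lowerToeplitz_col (N : ℕ) (φ : ℝ⟦X⟧) (k : Fin N) :
    ∑ j, |lowerToeplitz N φ j k| = ∑ m ∈ range (N - k), |coeff m φ| := by
  simp only [lowerToeplitz, apply_ite, abs_zero, Fin.le_iff_val_le_val]
  rw [Fin.sum_univ_eq_sum_range (fun j => if (k : ℕ) ≤ j then |coeff (j - k) φ| else 0),
    ← sum_filter, range_eq_Ico, Ico_filter_le, Nat.zero_max,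
    sum_Ico_eq_sum_range]
  simp

lemma matNorm1_lowerToeplitz (N : ℕ) (φ : ℝ⟦X⟧) :
    matNorm1 (lowerToeplitz N φ) = ∑ m ∈ range N, |coeff m φ| := by
  rcases N.eq_zero_or_pos with rfl | hN
  · simp [matNorm1]
  have : Nonempty (Fin N) := ⟨⟨0, hN⟩⟩
  refine le_antisymm (ciSup_le fun k => ?_) ?_
  · rw [sum_abs_lowerToeplitz_col]
    exact sum_le_sum_of_subset_of_nonneg (range_subset_range.mpr (Nat.sub_le _ _))
      fun _ _ _ => abs_nonneg _
  · refine le_ciSup_of_le (Set.finite_range _).bddAbove ⟨0, hN⟩ ?_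
    rw [sum_abs_lowerToeplitz_col, Nat.sub_zero]

end Toeplitz

section Renewal

variable {K : Type*} [Field K]

lemma coeff_mul_mk_one (φ : K⟦X⟧) (n : ℕ) :
    coeff n (φ * PowerSeries.mk 1) = ∑ m ∈ range (n + 1), coeff m φ := by
  simp [coeff_mul, Finset.Nat.sum_antidiagonal_eq_sum_range_succ_mk]

lemma inv_one_sub_eq_one_add_mul {Y : K⟦X⟧} (hY0 : constantCoeff Y = 0) :
    (1 - Y)⁻¹ = 1 + Y * (1 - Y)⁻¹ := by
  have h : (1 - Y) * (1 - Y)⁻¹ = 1 := PowerSeries.mul_inv_cancel _ (by simp [hY0])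
  linear_combination h

/-- The probability that a walk started at level `n - 1` stops successfully before it drops below
level `0`, when at each step it stops successfully with probability `x` and otherwise moves down by
`i ≥ 1` levels with probability `[Xⁱ] Y`. -/
noncomputable def absorptionProb (x : K) (Y : K⟦X⟧) (n : ℕ) : K :=
  x * ∑ m ∈ range n, coeff m (1 - Y)⁻¹

variable {x : K} {Y : K⟦X⟧}

lemma absorptionProb_succ (hY0 : constantCoeff Y = 0) (n : ℕ) :
    absorptionProb x Y (n + 1) =
      x + ∑ i ∈ range n, coeff (i + 1) Y * absorptionProb x Y (n - i) := by
  set F := (1 - Y)⁻¹ * PowerSeries.mk 1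
  have hF : F = PowerSeries.mk 1 + Y * F := by
    simp only [F]
    nth_rw 1 [inv_one_sub_eq_one_add_mul hY0]
    ring
  have hP : ∀ m, absorptionProb x Y (m + 1) = x * coeff m F := fun m => by
    rw [absorptionProb, coeff_mul_mk_one]
  rw [hP, hF, map_add, coeff_mul, Finset.Nat.sum_antidiagonal_eq_sum_range_succ_mk,
    sum_range_succ']
  simp only [coeff_mk, Pi.one_apply, mul_one, hY0, coeff_zero_eq_constantCoeff_apply, zero_mul,
    add_zero, mul_add, mul_sum]
  refine congrArg (x + ·) (sum_congr rfl fun i hi => ?_)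
  rw [mem_range] at hi
  rw [show n - i = n - (i + 1) + 1 by omega, hP]
  ring

variable [LinearOrder K] [IsStrictOrderedRing K]

lemma coeff_inv_one_sub_nonneg {Y : K⟦X⟧} (hY0 : constantCoeff Y = 0) (hY : ∀ n, 0 ≤ coeff n Y)
    (n : ℕ) : 0 ≤ coeff n (1 - Y)⁻¹ := by
  induction n using Nat.strong_induction_on with
  | _ n ih =>
    rw [inv_one_sub_eq_one_add_mul hY0, map_add, coeff_mul, coeff_one]
    refine add_nonneg (by split_ifs <;> simp) (sum_nonneg fun p hp => ?_)
    rw [HasAntidiagonal.mem_antidiagonal] at hp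
    rcases Nat.eq_zero_or_pos p.1 with h | h
    · simp [h, hY0]
    · exact mul_nonneg (hY _) (ih _ (by omega))

lemma absorptionProb_nonneg (hx : 0 ≤ x) (hY0 : constantCoeff Y = 0) (hY : ∀ n, 0 ≤ coeff n Y)
    (n : ℕ) : 0 ≤ absorptionProb x Y n :=
  mul_nonneg hx (sum_nonneg fun m _ => coeff_inv_one_sub_nonneg hY0 hY m)

lemma absorptionProb_monotone (hx : 0 ≤ x) (hY0 : constantCoeff Y = 0)
    (hY : ∀ n, 0 ≤ coeff n Y) : Monotone (absorptionProb x Y) :=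
  monotone_nat_of_le_succ fun n => by
    rw [absorptionProb, absorptionProb, sum_range_succ, mul_add]
    exact le_add_of_nonneg_right (mul_nonneg hx (coeff_inv_one_sub_nonneg hY0 hY n))

lemma absorptionProb_le_one (hY0 : constantCoeff Y = 0) (hY : ∀ n, 0 ≤ coeff n Y)
    (hmass : ∀ m, x + ∑ i ∈ range m, coeff (i + 1) Y ≤ 1) (n : ℕ) : absorptionProb x Y n ≤ 1 := by
  induction n using Nat.strong_induction_on with
  | _ n ih =>
    rcases n with _ | n
    · simp [absorptionProb]
    rw [absorptionProb_succ hY0]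
    refine le_trans (add_le_add_right (sum_le_sum fun i hi => ?_) x) (hmass n)
    exact mul_le_of_le_one_right (hY _) (ih _ (by omega))

lemma add_sum_mul_le_add_sum_mul_of_antitone {a b : K} {u w v : ℕ → K} (hv : Antitone v)
    (hv0 : ∀ i, 0 ≤ v i) (hv1 : v 0 ≤ 1)
    (hdom : ∀ m, a + ∑ i ∈ range m, u i ≤ b + ∑ i ∈ range m, w i) (n : ℕ) :
    a + ∑ i ∈ range n, u i * v i ≤ b + ∑ i ∈ range n, w i * v i := by
  set D : ℕ → K := fun m => b - a + ∑ i ∈ range m, (w i - u i)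
  have hD : ∀ m, 0 ≤ D m := fun m => by
    simp only [D, sum_sub_distrib]; linarith [hdom m]
  have key : ∀ m, v m * D m ≤ b - a + ∑ i ∈ range m, (w i - u i) * v i := by
    intro m
    induction m with
    | zero => simpa [D] using mul_le_of_le_one_left (hD 0) hv1
    | succ m ih =>
      have hD' : D (m + 1) = D m + (w m - u m) := by simp only [D, sum_range_succ]; ring
      calc v (m + 1) * D (m + 1) ≤ v m * D (m + 1) := by gcongr; exacts [hD _, hv m.le_succ]
        _ = v m * D m + (w m - u m) * v m := by rw [hD']; ring
        _ ≤ _ := by rw [sum_range_succ]; linarith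
  have := (mul_nonneg (hv0 n) (hD n)).trans (key n)
  simp only [sub_mul, sum_sub_distrib] at this
  linarith

lemma absorptionProb_le_absorptionProb {w : K} {Z : K⟦X⟧} (hw : 0 ≤ w)
    (hY0 : constantCoeff Y = 0) (hY : ∀ n, 0 ≤ coeff n Y)
    (hZ0 : constantCoeff Z = 0) (hZ : ∀ n, 0 ≤ coeff n Z)
    (hdom : ∀ m, x + ∑ i ∈ range m, coeff (i + 1) Y ≤ w + ∑ i ∈ range m, coeff (i + 1) Z)
    (hmass : ∀ m, w + ∑ i ∈ range m, coeff (i + 1) Z ≤ 1) (n : ℕ) :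
    absorptionProb x Y n ≤ absorptionProb w Z n := by
  induction n using Nat.strong_induction_on with
  | _ n ih =>
    rcases n with _ | n
    · simp [absorptionProb]
    have hQ := absorptionProb_monotone hw hZ0 hZ
    rw [absorptionProb_succ hY0, absorptionProb_succ hZ0]
    calc x + ∑ i ∈ range n, coeff (i + 1) Y * absorptionProb x Y (n - i)
        ≤ x + ∑ i ∈ range n, coeff (i + 1) Y * absorptionProb w Z (n - i) := by
          gcongr with i hi
          exacts [hY _, ih _ (by omega)]
      _ ≤ w + ∑ i ∈ range n, coeff (i + 1) Z * absorptionProb w Z (n - i) :=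
          add_sum_mul_le_add_sum_mul_of_antitone (fun i j hij => hQ (by omega))
            (absorptionProb_nonneg hw hZ0 hZ <| n - ·)
            (absorptionProb_le_one hZ0 hZ hmass _) hdom n

end Renewal

open Set

lemma setIntegral_mul_setIntegral_le_of_le_of_le {α : Type*} [MeasurableSpace α] {μ : Measure α}
    {s s' : Set α} (hs : MeasurableSet s) (hs' : MeasurableSet s') {f g : α → ℝ} {c : ℝ}
    (hf : ∀ x ∈ s, 0 ≤ f x) (hf' : ∀ x ∈ s', 0 ≤ f x)
    (hfs : IntegrableOn f s μ) (hfs' : IntegrableOn f s' μ)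
    (hfgs : IntegrableOn (fun x => f x * g x) s μ)
    (hfgs' : IntegrableOn (fun x => f x * g x) s' μ)
    (hg : ∀ x ∈ s, g x ≤ c) (hg' : ∀ x ∈ s', c ≤ g x) :
    (∫ x in s, f x * g x ∂μ) * ∫ x in s', f x ∂μ ≤
      (∫ x in s, f x ∂μ) * ∫ x in s', f x * g x ∂μ := by
  have hle : ∫ x in s, f x * g x ∂μ ≤ c * ∫ x in s, f x ∂μ := by
    rw [← integral_const_mul]
    refine setIntegral_mono_on hfgs (hfs.const_mul c) hs fun x hx => ?_
    rw [mul_comm c]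
    exact mul_le_mul_of_nonneg_left (hg x hx) (hf x hx)
  have hge : c * ∫ x in s', f x ∂μ ≤ ∫ x in s', f x * g x ∂μ := by
    rw [← integral_const_mul]
    refine setIntegral_mono_on (hfs'.const_mul c) hfgs' hs' fun x hx => ?_
    rw [mul_comm c]
    exact mul_le_mul_of_nonneg_left (hg' x hx) (hf' x hx)
  calc (∫ x in s, f x * g x ∂μ) * ∫ x in s', f x ∂μ
      ≤ (c * ∫ x in s, f x ∂μ) * ∫ x in s', f x ∂μ :=
        mul_le_mul_of_nonneg_right hle (setIntegral_nonneg hs' hf')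
    _ = (∫ x in s, f x ∂μ) * (c * ∫ x in s', f x ∂μ) := by ring
    _ ≤ (∫ x in s, f x ∂μ) * ∫ x in s', f x * g x ∂μ :=
        mul_le_mul_of_nonneg_left hge (setIntegral_nonneg hs hf)

lemma mixed_ratio_le {t A C A' C' : ℝ} (ht0 : 0 ≤ t) (ht1 : t ≤ 1) (hA' : 0 ≤ A') (hC : 0 ≤ C)
    (hAA' : A' ≤ A) (hCC' : C' ≤ C) (hcross : C' * A ≤ C * A') :
    (t + (2 * A' + 2 * (1 - t) * C')) / (t + (2 * A + 2 * (1 - t) * C)) ≤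
      (1 + 2 * A') / (1 + 2 * A) := by
  have hden : 0 < 1 + 2 * A := by linarith
  rcases (show 0 ≤ t + (2 * A + 2 * (1 - t) * C) by nlinarith).eq_or_lt with h | h
  · rw [← h, div_zero]; positivity
  rw [div_le_div_iff₀ h hden]
  nlinarith [mul_nonneg (sub_nonneg.2 ht1) (sub_nonneg.2 hAA'),
    mul_nonneg (sub_nonneg.2 ht1) (sub_nonneg.2 hCC'),
    mul_nonneg (sub_nonneg.2 ht1) (sub_nonneg.2 hcross)]

noncomputable def L0Density (β τ u : ℝ) : ℝ := τ * u / (u ^ β + τ)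

noncomputable def LiDensity (β τ : ℝ) (i : ℕ) (u : ℝ) : ℝ :=
  τ ^ i * u ^ (β + 1) / (u ^ β + τ) ^ (i + 1)

noncomputable def partialWeight (β τ : ℝ) (m : ℕ) (u : ℝ) : ℝ := 1 - (τ / (u ^ β + τ)) ^ m

section Densities

variable {β τ u : ℝ}

lemma L0Density_nonneg (hτ : 0 ≤ τ) (hu : 0 < u) : 0 ≤ L0Density β τ u := by
  have := Real.rpow_pos_of_pos hu β
  unfold L0Density; positivity

lemma LiDensity_nonneg (hτ : 0 ≤ τ) (hu : 0 < u) (i : ℕ) : 0 ≤ LiDensity β τ i u := by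
  have := Real.rpow_pos_of_pos hu β
  have := Real.rpow_pos_of_pos hu (β + 1)
  unfold LiDensity; positivity

lemma div_rpow_add_mem_Icc (hτ : 0 ≤ τ) (hu : 0 < u) : τ / (u ^ β + τ) ∈ Icc (0 : ℝ) 1 := by
  have := Real.rpow_pos_of_pos hu β
  exact ⟨by positivity, (div_le_one (by positivity)).2 (by linarith)⟩

lemma LiDensity_succ (hτ : 0 ≤ τ) (hu : 0 < u) (i : ℕ) :
    LiDensity β τ (i + 1) u =
      L0Density β τ u * ((1 - τ / (u ^ β + τ)) * (τ / (u ^ β + τ)) ^ i) := by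
  have hb := Real.rpow_pos_of_pos hu β
  have hd : u ^ β + τ ≠ 0 := by positivity
  rw [LiDensity, L0Density, Real.rpow_add_one hu.ne', div_pow]
  field_simp
  ring

lemma sum_LiDensity_succ (hτ : 0 ≤ τ) (hu : 0 < u) (m : ℕ) :
    ∑ i ∈ range m, LiDensity β τ (i + 1) u = L0Density β τ u * partialWeight β τ m u := by
  rw [sum_congr rfl fun i _ => LiDensity_succ hτ hu i, ← mul_sum, ← mul_sum, mul_neg_geom_sum,
    partialWeight]

lemma partialWeight_nonneg (hτ : 0 ≤ τ) (hu : 0 < u) (m : ℕ) : 0 ≤ partialWeight β τ m u :=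
  sub_nonneg.2 (pow_le_one₀ (div_rpow_add_mem_Icc hτ hu).1 (div_rpow_add_mem_Icc hτ hu).2)

lemma partialWeight_le_one (hτ : 0 ≤ τ) (hu : 0 < u) (m : ℕ) : partialWeight β τ m u ≤ 1 :=
  sub_le_self _ (pow_nonneg (div_rpow_add_mem_Icc hτ hu).1 _)

lemma partialWeight_le_partialWeight (hβ : 0 ≤ β) (hτ : 0 ≤ τ) (hu : 0 < u) {v : ℝ} (huv : u ≤ v)
    (m : ℕ) : partialWeight β τ m u ≤ partialWeight β τ m v := by
  have hb := Real.rpow_pos_of_pos hu β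
  refine sub_le_sub_left (pow_le_pow_left₀ (div_rpow_add_mem_Icc hτ (hu.trans_le huv)).1 ?_ m) 1
  exact div_le_div_of_nonneg_left hτ (by positivity)
    (by linarith [Real.rpow_le_rpow hu.le huv hβ])

lemma integrableOn_L0Density (hβ : 2 < β) (hτ : 0 ≤ τ) :
    IntegrableOn (L0Density β τ) (Ioi 0) := by
  have hmeas : Measurable (L0Density β τ) := by unfold L0Density; fun_prop
  rw [← Ioc_union_Ioi_eq_Ioi zero_le_one]
  refine IntegrableOn.union ?_ ?_
  · refine Measure.integrableOn_of_bounded (M := 1) measure_Ioc_lt_top.ne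
      hmeas.aestronglyMeasurable ((ae_restrict_iff' measurableSet_Ioc).2 (ae_of_all _ ?_))
    rintro u ⟨hu0, hu1⟩
    have hb := Real.rpow_pos_of_pos hu0 β
    rw [Real.norm_eq_abs, abs_of_nonneg (L0Density_nonneg hτ hu0), L0Density,
      div_le_one (by positivity)]
    nlinarith
  · refine Integrable.mono'
      ((integrableOn_Ioi_rpow_of_lt (a := 1 - β) (by linarith) one_pos).const_mul τ)
      hmeas.aestronglyMeasurable ((ae_restrict_iff' measurableSet_Ioi).2 (ae_of_all _ ?_))
    intro u (hu : 1 < u)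
    have hu0 : 0 < u := one_pos.trans hu
    have hb := Real.rpow_pos_of_pos hu0 β
    rw [Real.norm_eq_abs, abs_of_nonneg (L0Density_nonneg hτ hu0), L0Density,
      div_le_iff₀ (by positivity), show (1 - β) = -β + 1 by ring, Real.rpow_add_one hu0.ne',
      Real.rpow_neg hu0.le]
    field_simp
    nlinarith [Real.rpow_pos_of_pos hu0 (-β)]

lemma integrableOn_L0Density_mul (hβ : 2 < β) (hτ : 0 ≤ τ) {ψ : ℝ → ℝ} (hψ : Measurable ψ)
    (hψ1 : ∀ u ∈ Ioi (0 : ℝ), ψ u ∈ Icc (0 : ℝ) 1) :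
    IntegrableOn (fun u => L0Density β τ u * ψ u) (Ioi 0) :=
  (integrableOn_L0Density hβ hτ).mul_bdd (c := 1) hψ.aestronglyMeasurable <|
    (ae_restrict_iff' measurableSet_Ioi).2 <| ae_of_all _ fun u hu => by
      rw [Real.norm_eq_abs, abs_of_nonneg (hψ1 u hu).1]; exact (hψ1 u hu).2

lemma integrableOn_L0Density_mul_partialWeight (hβ : 2 < β) (hτ : 0 ≤ τ) (m : ℕ) :
    IntegrableOn (fun u => L0Density β τ u * partialWeight β τ m u) (Ioi 0) :=
  integrableOn_L0Density_mul hβ hτ (by unfold partialWeight; fun_prop)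
    fun _ hu => ⟨partialWeight_nonneg hτ hu m, partialWeight_le_one hτ hu m⟩

lemma integrableOn_LiDensity_succ (hβ : 2 < β) (hτ : 0 ≤ τ) (i : ℕ) :
    IntegrableOn (LiDensity β τ (i + 1)) (Ioi 0) := by
  refine (integrableOn_L0Density_mul hβ hτ (by fun_prop) fun u hu => ?_).congr_fun
    (fun _ hu => (LiDensity_succ hτ hu i).symm) measurableSet_Ioi
  obtain ⟨h0, h1⟩ := div_rpow_add_mem_Icc (β := β) hτ hu
  exact ⟨mul_nonneg (sub_nonneg.2 h1) (pow_nonneg h0 i),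
    mul_le_one₀ (sub_le_self _ h0) (pow_nonneg h0 i) (pow_le_one₀ h0 h1)⟩

lemma setIntegral_L0Density_mul_partialWeight_le (hβ : 2 < β) (hτ : 0 ≤ τ) {s : Set ℝ}
    (hs : MeasurableSet s) (hs0 : s ⊆ Ioi 0) (m : ℕ) :
    ∫ u in s, L0Density β τ u * partialWeight β τ m u ≤ ∫ u in s, L0Density β τ u :=
  setIntegral_mono_on ((integrableOn_L0Density_mul_partialWeight hβ hτ m).mono_set hs0)
    ((integrableOn_L0Density hβ hτ).mono_set hs0) hs fun _ hu =>
      mul_le_of_le_one_right (L0Density_nonneg hτ (hs0 hu)) (partialWeight_le_one hτ (hs0 hu) m)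

end Densities

noncomputable def mixedIntegral (t : ℝ) (f : ℝ → ℝ) : ℝ :=
  2 * t * (∫ u in Ioi (1 : ℝ), f u) + 2 * (1 - t) * ∫ u in Ioi (0 : ℝ), f u

section MixedIntegral

variable {t : ℝ} {f g : ℝ → ℝ}

lemma mixedIntegral_nonneg (ht0 : 0 ≤ t) (ht1 : t ≤ 1) (hf : ∀ u ∈ Ioi (0 : ℝ), 0 ≤ f u) :
    0 ≤ mixedIntegral t f := by
  have h1 : 0 ≤ ∫ u in Ioi 1, f u :=
    setIntegral_nonneg measurableSet_Ioi fun u (hu : 1 < u) => hf u (one_pos.trans hu)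
  have h0 : 0 ≤ ∫ u in Ioi 0, f u := setIntegral_nonneg measurableSet_Ioi hf
  unfold mixedIntegral
  nlinarith

lemma mixedIntegral_congr (h : EqOn f g (Ioi (0 : ℝ))) :
    mixedIntegral t f = mixedIntegral t g := by
  rw [mixedIntegral, mixedIntegral, setIntegral_congr_fun measurableSet_Ioi h,
    setIntegral_congr_fun measurableSet_Ioi (h.mono (Ioi_subset_Ioi zero_le_one))]

lemma sum_mixedIntegral {ι : Type*} (s : Finset ι) {f : ι → ℝ → ℝ}
    (hf : ∀ i ∈ s, IntegrableOn (f i) (Ioi 0)) :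
    ∑ i ∈ s, mixedIntegral t (f i) = mixedIntegral t fun u => ∑ i ∈ s, f i u := by
  simp only [mixedIntegral, sum_add_distrib, ← mul_sum]
  rw [integral_finsetSum s hf,
    integral_finsetSum s fun i hi => (hf i hi).mono_set (Ioi_subset_Ioi zero_le_one)]

lemma mixedIntegral_eq (hf : IntegrableOn f (Ioi 0)) :
    mixedIntegral t f = 2 * (∫ u in Ioi 1, f u) + 2 * (1 - t) * ∫ u in Ioc 0 1, f u := by
  rw [mixedIntegral, ← Ioc_union_Ioi_eq_Ioi zero_le_one,
    setIntegral_union (Ioc_disjoint_Ioi le_rfl) measurableSet_Ioi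
      (hf.mono_set Ioc_subset_Ioi_self) (hf.mono_set (Ioi_subset_Ioi zero_le_one))]
  ring

end MixedIntegral

section Application

variable {β τ t : ℝ}

lemma L0_eq_mixedIntegral (β τ t : ℝ) : L0 β τ t = mixedIntegral t (L0Density β τ) := rfl

lemma Li_eq_mixedIntegral (β τ : ℝ) (i : ℕ) (t : ℝ) :
    Li β τ i t = mixedIntegral t (LiDensity β τ i) := rfl

lemma Li_nonneg (hτ : 0 ≤ τ) (ht0 : 0 ≤ t) (ht1 : t ≤ 1) (i : ℕ) : 0 ≤ Li β τ i t :=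
  mixedIntegral_nonneg ht0 ht1 fun _ hu => LiDensity_nonneg hτ hu i

lemma add_L0_nonneg (hτ : 0 ≤ τ) (ht0 : 0 ≤ t) (ht1 : t ≤ 1) : 0 ≤ t + L0 β τ t :=
  add_nonneg ht0 (mixedIntegral_nonneg ht0 ht1 fun _ hu => L0Density_nonneg hτ hu)

lemma sum_Li_succ (hβ : 2 < β) (hτ : 0 ≤ τ) (t : ℝ) (m : ℕ) :
    ∑ i ∈ range m, Li β τ (i + 1) t =
      mixedIntegral t fun u => L0Density β τ u * partialWeight β τ m u := by
  simp only [Li_eq_mixedIntegral]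
  rw [sum_mixedIntegral _ fun i _ => integrableOn_LiDensity_succ hβ hτ i]
  exact mixedIntegral_congr fun _ hu => sum_LiDensity_succ hτ hu m

lemma lossRatio_le_lossRatio_one (hβ : 2 < β) (hτ : 0 ≤ τ) (ht0 : 0 ≤ t) (ht1 : t ≤ 1) (m : ℕ) :
    (t + ∑ i ∈ range m, Li β τ (i + 1) t) / (t + L0 β τ t) ≤
      (1 + ∑ i ∈ range m, Li β τ (i + 1) 1) / (1 + L0 β τ 1) := by
  simp only [sum_Li_succ hβ hτ, L0_eq_mixedIntegral,
    mixedIntegral_eq (integrableOn_L0Density hβ hτ),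
    mixedIntegral_eq (integrableOn_L0Density_mul_partialWeight hβ hτ m), sub_self, mul_zero,
    zero_mul, add_zero]
  have hφ : ∀ u v : ℝ, 0 < u → u ≤ v → partialWeight β τ m u ≤ partialWeight β τ m v :=
    fun _ _ hu huv => partialWeight_le_partialWeight (by linarith) hτ hu huv m
  refine mixed_ratio_le ht0 ht1 ?_ ?_ ?_ ?_ ?_
  · exact setIntegral_nonneg measurableSet_Ioi fun u (hu : 1 < u) => mul_nonneg
      (L0Density_nonneg hτ (one_pos.trans hu)) (partialWeight_nonneg hτ (one_pos.trans hu) m)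
  · exact setIntegral_nonneg measurableSet_Ioc fun u hu => L0Density_nonneg hτ hu.1
  · exact setIntegral_L0Density_mul_partialWeight_le hβ hτ measurableSet_Ioi
      (Ioi_subset_Ioi zero_le_one) m
  · exact setIntegral_L0Density_mul_partialWeight_le hβ hτ measurableSet_Ioc Ioc_subset_Ioi_self m
  · exact setIntegral_mul_setIntegral_le_of_le_of_le measurableSet_Ioc measurableSet_Ioi
      (fun u hu => L0Density_nonneg hτ hu.1)
      (fun u (hu : 1 < u) => L0Density_nonneg hτ (one_pos.trans hu))
      ((integrableOn_L0Density hβ hτ).mono_set Ioc_subset_Ioi_self)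
      ((integrableOn_L0Density hβ hτ).mono_set (Ioi_subset_Ioi zero_le_one))
      ((integrableOn_L0Density_mul_partialWeight hβ hτ m).mono_set Ioc_subset_Ioi_self)
      ((integrableOn_L0Density_mul_partialWeight hβ hτ m).mono_set (Ioi_subset_Ioi zero_le_one))
      (fun u hu => hφ u 1 hu.1 hu.2) (fun u (hu : 1 < u) => hφ 1 u one_pos hu.le)

lemma lossRatio_one_le_one (hβ : 2 < β) (hτ : 0 ≤ τ) (m : ℕ) :
    (1 + ∑ i ∈ range m, Li β τ (i + 1) 1) / (1 + L0 β τ 1) ≤ 1 := by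
  simp only [sum_Li_succ hβ hτ, L0_eq_mixedIntegral,
    mixedIntegral_eq (integrableOn_L0Density hβ hτ),
    mixedIntegral_eq (integrableOn_L0Density_mul_partialWeight hβ hτ m), sub_self, mul_zero,
    zero_mul, add_zero]
  have hA : 0 ≤ ∫ u in Ioi 1, L0Density β τ u :=
    setIntegral_nonneg measurableSet_Ioi fun u (hu : 1 < u) =>
      L0Density_nonneg hτ (one_pos.trans hu)
  rw [div_le_one (by linarith)]
  linarith [setIntegral_L0Density_mul_partialWeight_le hβ hτ measurableSet_Ioi
      (Ioi_subset_Ioi zero_le_one) m]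

noncomputable def normalizedLossSeries (β τ t : ℝ) : ℝ⟦X⟧ :=
  PowerSeries.mk fun n => if n = 0 then 0 else Li β τ n t / (t + L0 β τ t)

lemma constantCoeff_normalizedLossSeries : constantCoeff (normalizedLossSeries β τ t) = 0 := by
  simp [normalizedLossSeries, ← coeff_zero_eq_constantCoeff_apply]

lemma coeff_normalizedLossSeries_nonneg (hτ : 0 ≤ τ) (ht0 : 0 ≤ t) (ht1 : t ≤ 1) (n : ℕ) :
    0 ≤ coeff n (normalizedLossSeries β τ t) := by
  rw [normalizedLossSeries, coeff_mk]
  split_ifs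
  exacts [le_rfl, div_nonneg (Li_nonneg hτ ht0 ht1 n) (add_L0_nonneg hτ ht0 ht1)]

lemma smul_Dmat_eq_lowerToeplitz (N : ℕ) :
    (1 / (t + L0 β τ t)) • Dmat β τ N t = lowerToeplitz N (normalizedLossSeries β τ t) := by
  ext j k
  simp only [Dmat, lowerToeplitz, normalizedLossSeries, coeff_mk, Matrix.smul_apply, smul_eq_mul,
    Fin.le_iff_val_le_val]
  split_ifs <;> first | omega | simp [div_eq_inv_mul]

lemma Pc_eq_absorptionProb (hτ : 0 ≤ τ) (ht0 : 0 ≤ t) (ht1 : t ≤ 1) (N : ℕ) :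
    Pc β τ N t = absorptionProb (t / (t + L0 β τ t)) (normalizedLossSeries β τ t) N := by
  rw [Pc, smul_Dmat_eq_lowerToeplitz, ← lowerToeplitz_one, ← lowerToeplitz_sub,
    lowerToeplitz_inv _ (by simp [constantCoeff_normalizedLossSeries]), matNorm1_lowerToeplitz,
    absorptionProb]
  congr 1
  refine sum_congr rfl fun m _ => abs_of_nonneg ?_
  exact coeff_inv_one_sub_nonneg constantCoeff_normalizedLossSeries
    (coeff_normalizedLossSeries_nonneg hτ ht0 ht1) m

lemma add_sum_coeff_normalizedLossSeries (m : ℕ) :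
    t / (t + L0 β τ t) + ∑ i ∈ range m, coeff (i + 1) (normalizedLossSeries β τ t) =
      (t + ∑ i ∈ range m, Li β τ (i + 1) t) / (t + L0 β τ t) := by
  simp [normalizedLossSeries, add_div, sum_div]

end Application

theorem Pc_nonneg_le_Pb_general (β τ : ℝ) (hβ : 2 < β) (hτ : 0 < τ) (N : ℕ) :
    (∀ t ∈ Set.Icc (0 : ℝ) 1, 0 ≤ Pc β τ N t ∧ Pc β τ N t ≤ Pc β τ N 1) ∧
    Pc β τ N 0 = 0 := by
  refine ⟨fun t ⟨ht0, ht1⟩ => ?_, by simp [Pc]⟩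
  have hY := coeff_normalizedLossSeries_nonneg (β := β) hτ.le ht0 ht1
  have hY1 := coeff_normalizedLossSeries_nonneg (β := β) hτ.le zero_le_one le_rfl
  rw [Pc_eq_absorptionProb hτ.le ht0 ht1, Pc_eq_absorptionProb hτ.le zero_le_one le_rfl]
  refine ⟨absorptionProb_nonneg (div_nonneg ht0 (add_L0_nonneg hτ.le ht0 ht1))
    constantCoeff_normalizedLossSeries hY N, ?_⟩
  refine absorptionProb_le_absorptionProb
    (div_nonneg zero_le_one (add_L0_nonneg hτ.le zero_le_one le_rfl))
    constantCoeff_normalizedLossSeries hY constantCoeff_normalizedLossSeries hY1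
    (fun m => ?_) (fun m => ?_) N
  · rw [add_sum_coeff_normalizedLossSeries, add_sum_coeff_normalizedLossSeries]
    exact lossRatio_le_lossRatio_one hβ hτ.le ht0 ht1 m
  · rw [add_sum_coeff_normalizedLossSeries]
    exact lossRatio_one_le_one hβ hτ.le m

/-- **Property 3 of the paper's Lemma 3**: for every `t ∈ [0,1]`, `0 ≤ P_c(t) ≤ P_b` where
`P_b = P_c(1)` is the STP of a backhaul file; moreover `P_c(0) = 0`. -/
theorem Pc_nonneg_le_Pb (β τ : ℝ) (hβ : 2 < β) (hτ : 0 < τ) (N : ℕ) (hN : 1 ≤ N) :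
    (∀ t ∈ Set.Icc (0 : ℝ) 1, 0 ≤ Pc β τ N t ∧ Pc β τ N t ≤ Pc β τ N 1) ∧
    Pc β τ N 0 = 0 :=
  Pc_nonneg_le_Pb_general β τ hβ hτ N
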